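/- arXiv:math/0005028 — 3 statements merged into one kernel-verified Lean document; each statement's English description precedes it below -/
import Mathlib

section
/- If f ∈ ℤ[x] is a polynomial of degree D whose coefficients all have absolute value at most c, and g ∈ ℤ[x] divides f in ℤ[x], then every coefficient of g has absolute value at most √(D+1) · 2^D · c. -/
/-!
Pass to `ℂ[X]` and use the Mahler measure `M`, which is multiplicative and at least `1` on nonzero
integer polynomials. Writing `f = g * h`, the `i`-th coefficient of `g` is at most
`(deg g).choose i * M g ≤ 2 ^ deg g * M g * M h = 2 ^ deg g * M f`, and Landau's inequality
bounds `M f` by the `ℓ²` norm of the coefficients of `f`, hence by `√(D + 1) * c`.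
-/

open Polynomial

namespace Polynomial

theorem supNorm_le_iff {A : Type*} [SeminormedRing A] (p : A[X]) (c : ℝ) :
    p.supNorm ≤ c ↔ ∀ i, ‖p.coeff i‖ ≤ c :=
  ⟨fun h i ↦ (p.le_supNorm i).trans h, fun h ↦ by
    obtain ⟨i, hi⟩ := p.exists_eq_supNorm
    exact hi ▸ h i⟩

theorem mahlerMeasure_le_sqrt_natDegree_add_one_mul {p : ℂ[X]} {c : ℝ}
    (hc : ∀ i, ‖p.coeff i‖ ≤ c) : p.mahlerMeasure ≤ √(p.natDegree + 1) * c :=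
  p.mahlerMeasure_le_sqrt_natDegree_add_one_mul_supNorm.trans <| by
    gcongr
    exact (p.supNorm_le_iff c).mpr hc

theorem abs_coeff_le_two_pow_mul_mahlerMeasure_of_dvd {f g : ℤ[X]} (hf : f ≠ 0) (hdvd : g ∣ f)
    (n : ℕ) : |(g.coeff n : ℝ)| ≤ 2 ^ g.natDegree * (f.map (Int.castRingHom ℂ)).mahlerMeasure := by
  obtain ⟨h, rfl⟩ := hdvd
  have hh : 1 ≤ (h.map (Int.castRingHom ℂ)).mahlerMeasure :=
    one_le_mahlerMeasure_of_ne_zero (right_ne_zero_of_mul hf)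
  have hg := norm_coeff_le_choose_mul_mahlerMeasure_of_one_le_mahlerMeasure n
    (g.map (Int.castRingHom ℂ)) _ hh
  rw [← Polynomial.map_mul, natDegree_map_eq_of_injective (RingHom.injective_int _),
    coeff_map, eq_intCast, Complex.norm_intCast] at hg
  refine hg.trans ?_
  gcongr
  · exact mahlerMeasure_nonneg _
  · exact_mod_cast Nat.choose_le_two_pow _ _

end Polynomial

/-- Mignotte's factor bound. -/
theorem mignotte_divisor_bound (f g : Polynomial ℤ) (D : ℕ) (c : ℝ)
    (hf : f ≠ 0) (hD : f.natDegree = D)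
    (hc : ∀ i, (|f.coeff i| : ℝ) ≤ c)
    (hdvd : g ∣ f) :
    ∀ i, (|g.coeff i| : ℝ) ≤ Real.sqrt (D + 1) * 2 ^ D * c := by
  intro i
  subst hD
  set F := f.map (Int.castRingHom ℂ)
  have hF : ∀ j, ‖F.coeff j‖ ≤ c := by simpa [F, Complex.norm_intCast] using hc
  have hFdeg : F.natDegree = f.natDegree :=
    natDegree_map_eq_of_injective (RingHom.injective_int _) f
  calc (|g.coeff i| : ℝ) ≤ 2 ^ g.natDegree * F.mahlerMeasure :=
        abs_coeff_le_two_pow_mul_mahlerMeasure_of_dvd hf hdvd i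
    _ ≤ 2 ^ f.natDegree * (√(f.natDegree + 1) * c) := by
        gcongr
        · exact mahlerMeasure_nonneg F
        · norm_num
        · exact natDegree_le_of_dvd hdvd hf
        · exact hFdeg ▸ mahlerMeasure_le_sqrt_natDegree_add_one_mul hF
    _ = √(f.natDegree + 1) * 2 ^ f.natDegree * c := by ring
end

section
/- Let A and B be complex N×N matrices such that B has at most N' nonzero rows, every row of A has Euclidean norm at most v, and every row of B has Euclidean norm at most w. Then the coefficient of s^j in the polynomial det(A + s·B) ∈ ℂ[s] has absolute value at most C(N', j) · v^(N−j) · (v + w)^j. -/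
/-!
Expanding `det (A + s • B)` row by row by multilinearity, the coefficient of `s ^ j` is the sum,
over the `j`-element sets `S` of rows, of the determinant of the matrix taking its rows in `S`
from `B` and the others from `A`. Only sets `S` of nonzero rows of `B` contribute, at most
`C(N', j)` of them, and by Hadamard's inequality each contributes at most `v ^ (N - j) * w ^ j`.
Hadamard's inequality itself comes from AM-GM applied to the eigenvalues of `M * Mᴴ` once the rows
of `M` are normalised.
-/

open Finset Polynomial
open scoped ComplexOrder

theorem Real.prod_le_arith_mean_pow {ι : Type*} (s : Finset ι) (z : ι → ℝ)
    (hz : ∀ i ∈ s, 0 ≤ z i) : ∏ i ∈ s, z i ≤ ((∑ i ∈ s, z i) / #s) ^ #s := by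
  rcases s.eq_empty_or_nonempty with rfl | hs
  · simp
  have hcard : (#s : ℝ) ≠ 0 := by positivity
  have amgm := Real.geom_mean_le_arith_mean_weighted s (fun _ => (#s : ℝ)⁻¹) z
    (fun _ _ => by positivity) (by simp [hcard]) hz
  rw [Real.finsetProd_rpow s z hz, ← mul_sum, inv_mul_eq_div] at amgm
  calc ∏ i ∈ s, z i = ((∏ i ∈ s, z i) ^ (#s : ℝ)⁻¹) ^ #s :=
        (Real.rpow_inv_natCast_pow (prod_nonneg hz) hs.card_ne_zero).symm
    _ ≤ ((∑ i ∈ s, z i) / #s) ^ #s := by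
        gcongr
        exact Real.rpow_nonneg (prod_nonneg hz) _

namespace Matrix

section Expansion

variable {n R : Type*} [Fintype n] [DecidableEq n] [CommRing R]

theorem det_add_eq_sum_det_ite (A B : Matrix n n R) :
    det (A + B) = ∑ s : Finset n, det (of fun i k => if i ∈ s then B i k else A i k) := by
  rw [add_comm]
  refine (detRowAlternating.map_add_univ B A).trans (sum_congr rfl fun s _ => ?_)
  congr 1
  ext i k
  by_cases hi : i ∈ s <;> simp [Finset.piecewise, hi]

theorem det_of_ite_mul (c : R) (M : Matrix n n R) (s : Finset n) :
    det (of fun i k => if i ∈ s then c * M i k else M i k) = c ^ #s * det M := by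
  calc det (of fun i k => if i ∈ s then c * M i k else M i k)
      = det (of fun i k => (if i ∈ s then c else 1) * M i k) := by
        congr 1
        ext i k
        by_cases hi : i ∈ s <;> simp [hi]
    _ = c ^ #s * det M := by rw [det_mul_column, prod_ite_mem, univ_inter, prod_const]

theorem det_of_ite_eq_zero {A B : Matrix n n R} {s : Finset n} {i : n} (hi : i ∈ s)
    (hB : B i = 0) : det (of fun i k => if i ∈ s then B i k else A i k) = 0 :=
  det_eq_zero_of_row_eq_zero i fun k => by simp [hi, hB]

theorem det_map_add_X_smul_map (A B : Matrix n n R) :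
    det (A.map C + (X : R[X]) • B.map C) =
      ∑ s : Finset n, X ^ #s * C (det (of fun i k => if i ∈ s then B i k else A i k)) := by
  rw [det_add_eq_sum_det_ite]
  refine sum_congr rfl fun s _ => ?_
  rw [RingHom.map_det, ← det_of_ite_mul]
  congr 1
  ext i k
  by_cases hi : i ∈ s <;> simp [hi]

theorem coeff_det_map_add_X_smul_map (A B : Matrix n n R) (j : ℕ) :
    (det (A.map C + (X : R[X]) • B.map C)).coeff j =
      ∑ s ∈ powersetCard j univ, det (of fun i k => if i ∈ s then B i k else A i k) := by
  simp_rw [det_map_add_X_smul_map, finsetSum_coeff, mul_comm (X ^ _), coeff_C_mul_X_pow,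
    ← sum_filter, powersetCard_eq_filter, powerset_univ, eq_comm]

end Expansion

section Hadamard

variable {n 𝕜 : Type*} [Fintype n] [RCLike 𝕜]

open RCLike

theorem PosSemidef.re_det_le_re_trace_div_card_pow [DecidableEq n] {P : Matrix n n 𝕜}
    (hP : P.PosSemidef) : re P.det ≤ (re P.trace / Fintype.card n) ^ Fintype.card n := by
  have h := Real.prod_le_arith_mean_pow univ hP.1.eigenvalues fun i _ => hP.eigenvalues_nonneg i
  rwa [hP.1.det_eq_prod_eigenvalues, hP.1.trace_eq_sum_eigenvalues, ← ofReal_prod, ← ofReal_sum,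
    ofReal_re, ofReal_re]

theorem re_trace_mul_conjTranspose (M : Matrix n n 𝕜) :
    re (M * Mᴴ).trace = ∑ i, ∑ k, ‖M i k‖ ^ 2 := by
  simp only [trace, diag_apply, mul_apply, conjTranspose_apply, star_def, RCLike.mul_conj]
  simp

theorem norm_det_le_one_of_sum_norm_sq_le_one [DecidableEq n] (M : Matrix n n 𝕜)
    (hM : ∀ i, ∑ k, ‖M i k‖ ^ 2 ≤ 1) : ‖M.det‖ ≤ 1 := by
  have hsq : ‖M.det‖ ^ 2 = re (M * Mᴴ).det := by
    rw [det_mul, det_conjTranspose, star_def, RCLike.mul_conj, ← ofReal_pow, ofReal_re]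
  have htr_nonneg : 0 ≤ re (M * Mᴴ).trace := by
    rw [re_trace_mul_conjTranspose]
    positivity
  have htr_le : re (M * Mᴴ).trace ≤ Fintype.card n := by
    rw [re_trace_mul_conjTranspose, ← card_univ, ← nsmul_one, ← sum_const]
    exact sum_le_sum fun i _ => hM i
  have hdet := (posSemidef_self_mul_conjTranspose M).re_det_le_re_trace_div_card_pow
  rw [← hsq] at hdet
  refine (pow_le_one_iff_of_nonneg (norm_nonneg _) two_ne_zero).mp (hdet.trans ?_)
  exact pow_le_one₀ (by positivity) (div_le_one_of_le₀ htr_le (Nat.cast_nonneg _))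

theorem norm_det_le_prod_sqrt_sum_norm_sq [DecidableEq n] (M : Matrix n n 𝕜) :
    ‖M.det‖ ≤ ∏ i, √(∑ k, ‖M i k‖ ^ 2) := by
  set r : n → ℝ := fun i => √(∑ k, ‖M i k‖ ^ 2)
  have hr : ∀ i, r i ^ 2 = ∑ k, ‖M i k‖ ^ 2 := fun i => Real.sq_sqrt (by positivity)
  have hentry : ∀ i k, ‖M i k‖ ≤ r i := fun i k => by
    simpa using Real.abs_le_sqrt
      (single_le_sum (f := fun k => ‖M i k‖ ^ 2) (fun _ _ => by positivity) (mem_univ k))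
  set U : Matrix n n 𝕜 := of fun i k => ((r i)⁻¹ : 𝕜) * M i k
  -- `U` has junk row `0` where `r i = 0`, but then the row of `M` vanishes as well
  have hM : M = of fun i k => (r i : 𝕜) * U i k := by
    ext i k
    by_cases hri : r i = 0
    · simpa [hri] using hentry i k
    · simp [U, hri]
  have hU : ∀ i, ∑ k, ‖U i k‖ ^ 2 ≤ 1 := fun i => by
    have hUi : ∑ k, ‖U i k‖ ^ 2 = ((r i)⁻¹ * r i) ^ 2 := by
      simp [U, mul_pow, ← mul_sum, ← hr]
    rw [hUi]
    exact pow_le_one₀ (by positivity) (inv_mul_le_one_of_le₀ le_rfl (Real.sqrt_nonneg _))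
  calc ‖M.det‖ = (∏ i, r i) * ‖U.det‖ := by
        conv_lhs => rw [hM]
        rw [det_mul_column, norm_mul, norm_prod]
        simp [r, abs_of_nonneg (Real.sqrt_nonneg _)]
    _ ≤ ∏ i, r i :=
        mul_le_of_le_one_right (by positivity) (norm_det_le_one_of_sum_norm_sq_le_one U hU)

theorem norm_det_of_ite_le [DecidableEq n] (A B : Matrix n n 𝕜) (s : Finset n) {v w : ℝ}
    (hA : ∀ i, √(∑ k, ‖A i k‖ ^ 2) ≤ v) (hB : ∀ i, √(∑ k, ‖B i k‖ ^ 2) ≤ w) :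
    ‖det (of fun i k => if i ∈ s then B i k else A i k)‖ ≤
      w ^ #s * v ^ (Fintype.card n - #s) := by
  refine (norm_det_le_prod_sqrt_sum_norm_sq _).trans ?_
  calc ∏ i, √(∑ k, ‖(of fun i k => if i ∈ s then B i k else A i k) i k‖ ^ 2)
      ≤ ∏ i, (if i ∈ s then w else v) := by
        refine prod_le_prod (fun i _ => Real.sqrt_nonneg _) fun i _ => ?_
        by_cases hi : i ∈ s
        · simpa [hi] using hB i
        · simpa [hi] using hA i
    _ = w ^ #s * v ^ (Fintype.card n - #s) := by
        rw [prod_ite, filter_mem_eq_inter, univ_inter, prod_const, prod_const, filter_not,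
          filter_mem_eq_inter, univ_inter, card_sdiff_of_subset (subset_univ s), card_univ]

end Hadamard

end Matrix

open Polynomial in
/-- Generalized Hadamard bound for coefficients of det(A + s B). -/
theorem det_add_smul_coeff_bound (N N' j : ℕ) (A B : Matrix (Fin N) (Fin N) ℂ)
    (v w : ℝ) (hv : 0 ≤ v) (hw : 0 ≤ w)
    (hB : {i : Fin N | B i ≠ 0}.ncard ≤ N')
    (hA : ∀ i, Real.sqrt (∑ k, ‖A i k‖ ^ 2) ≤ v)
    (hBrow : ∀ i, Real.sqrt (∑ k, ‖B i k‖ ^ 2) ≤ w) :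
    ‖(Matrix.det (Matrix.of fun i k => (C (A i k) + X * C (B i k)))).coeff j‖ ≤
      (N'.choose j : ℝ) * v ^ (N - j) * (v + w) ^ j := by
  classical
  set T := univ.filter fun i => B i ≠ 0
  have hT : #T ≤ N' := by
    rw [← Set.ncard_coe_finset]
    simpa [T] using hB
  have hmat : Matrix.of (fun i k => C (A i k) + X * C (B i k)) =
      A.map C + (X : ℂ[X]) • B.map C := by
    ext i k : 2
    simp
  have hvanish : ∀ s ∈ powersetCard j univ, s ∉ powersetCard j T →
      Matrix.det (Matrix.of fun i k => if i ∈ s then B i k else A i k) = 0 := by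
    intro s hs hsT
    obtain ⟨i, his, hiT⟩ := not_subset.mp fun hsub => hsT (mem_powersetCard.mpr
      ⟨hsub, (mem_powersetCard.mp hs).2⟩)
    exact Matrix.det_of_ite_eq_zero his (by simpa [T] using hiT)
  rw [hmat, Matrix.coeff_det_map_add_X_smul_map,
    ← sum_subset (powersetCard_mono (subset_univ T)) hvanish]
  calc _ ≤ ∑ s ∈ powersetCard j T, w ^ j * v ^ (N - j) := by
        refine norm_sum_le_of_le _ fun s hs => ?_
        simpa [(mem_powersetCard.mp hs).2] using Matrix.norm_det_of_ite_le A B s hA hBrow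
    _ ≤ (N'.choose j : ℝ) * v ^ (N - j) * (v + w) ^ j := by
        rw [sum_const, card_powersetCard, nsmul_eq_mul, mul_comm (w ^ j), ← mul_assoc]
        gcongr
        linarith
end

section
/- Hadamard's inequality: for a complex N×N matrix A whose rows each have Euclidean norm at most v, one has |det A| ≤ v^N. -/
/-!
Gram–Schmidt applied to the rows `vᵢ` gives an orthonormal basis `(bᵢ)` in which the rows form
an upper triangular matrix, so their determinant is `∏ ⟪bᵢ, vᵢ⟫`, and each factor is at most
`‖vᵢ‖` by Cauchy–Schwarz. Passing between orthonormal bases changes the determinant only by a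
factor of modulus one.
-/

open scoped InnerProductSpace
open Module

section

variable {𝕜 E : Type*} [RCLike 𝕜] [NormedAddCommGroup E] [InnerProductSpace 𝕜 E]
variable {ι : Type*} [Fintype ι] [DecidableEq ι]

theorem OrthonormalBasis.norm_det_eq_norm_det (e b : OrthonormalBasis ι 𝕜 E) (v : ι → E) :
    ‖e.toBasis.det v‖ = ‖b.toBasis.det v‖ := by
  rw [AlternatingMap.eq_smul_basis_det b.toBasis e.toBasis.det, AlternatingMap.smul_apply,
    smul_eq_mul, norm_mul, b.coe_toBasis, e.det_to_matrix_orthonormalBasis, one_mul]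

theorem OrthonormalBasis.norm_det_le_prod_norm_of_linearOrder [LinearOrder ι]
    [LocallyFiniteOrderBot ι] (e : OrthonormalBasis ι 𝕜 E) (v : ι → E) :
    ‖e.toBasis.det v‖ ≤ ∏ i, ‖v i‖ := by
  have := e.toBasis.finiteDimensional_of_finite
  have hdim : finrank 𝕜 E = Fintype.card ι := finrank_eq_card_basis e.toBasis
  set b := InnerProductSpace.gramSchmidtOrthonormalBasis hdim v
  rw [e.norm_det_eq_norm_det b, InnerProductSpace.gramSchmidtOrthonormalBasis_det, norm_prod]
  gcongr with i
  calc ‖⟪b i, v i⟫_𝕜‖ ≤ ‖b i‖ * ‖v i‖ := norm_inner_le_norm _ _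
    _ = ‖v i‖ := by rw [b.orthonormal.1 i, one_mul]

theorem OrthonormalBasis.norm_det_le_prod_norm (e : OrthonormalBasis ι 𝕜 E) (v : ι → E) :
    ‖e.toBasis.det v‖ ≤ ∏ i, ‖v i‖ := by
  set σ := Fintype.equivFin ι
  calc ‖e.toBasis.det v‖ = ‖(e.reindex σ).toBasis.det (v ∘ σ.symm)‖ := by
        rw [OrthonormalBasis.reindex_toBasis, Basis.det_reindex, Function.comp_assoc,
          σ.symm_comp_self, Function.comp_id]
    _ ≤ ∏ i, ‖(v ∘ σ.symm) i‖ := (e.reindex σ).norm_det_le_prod_norm_of_linearOrder _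
    _ = ∏ i, ‖v i‖ := σ.symm.prod_comp (fun i => ‖v i‖)

theorem Matrix.det_eq_basisFun_det (A : Matrix ι ι 𝕜) :
    A.det = (EuclideanSpace.basisFun ι 𝕜).toBasis.det (fun i => WithLp.toLp 2 (A i)) := by
  rw [Basis.det_apply, ← A.det_transpose]
  congr 1

theorem Matrix.norm_det_le_prod_sqrt_sum_sq_row (A : Matrix ι ι 𝕜) :
    ‖A.det‖ ≤ ∏ i, √(∑ j, ‖A i j‖ ^ 2) := by
  rw [A.det_eq_basisFun_det]
  simpa only [EuclideanSpace.norm_eq] using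
    (EuclideanSpace.basisFun ι 𝕜).norm_det_le_prod_norm _

end

/-- Hadamard's inequality. -/
theorem hadamard_det_bound (N : ℕ) (A : Matrix (Fin N) (Fin N) ℂ) (v : ℝ)
    (hrows : ∀ i, Real.sqrt (∑ j, ‖A i j‖ ^ 2) ≤ v) :
    ‖A.det‖ ≤ v ^ N := by
  calc ‖A.det‖ ≤ ∏ i, √(∑ j, ‖A i j‖ ^ 2) := A.norm_det_le_prod_sqrt_sum_sq_row
    _ ≤ ∏ _i : Fin N, v := Finset.prod_le_prod (fun _ _ => Real.sqrt_nonneg _) fun i _ => hrows i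
    _ = v ^ N := by simp
end
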